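/- For any matrix Z ∈ ℝ^{p×p}, the supremum of ⟨Z, A⟩ over matrices A with mixed atomic norm ‖A‖_{Γ_s} ≤ 1 is at most the supremum of ⟨Zu, v⟩ over pairs of vectors u, v ∈ ℝ^p with ‖u‖₂ ≤ 1, ‖v‖₂ ≤ 1 and u, v both s-sparse. -/

import Mathlib

open MeasureTheory ProbabilityTheory Finset

noncomputable section

/-- Vectors in ℝ^p. -/
abbrev Vec (p : ℕ) := Fin p → ℝ

/-- p × p real matrices. -/
abbrev Mat (p : ℕ) := Matrix (Fin p) (Fin p) ℝ

/-- Euclidean (ℓ2) norm. -/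
def l2 {p : ℕ} (u : Vec p) : ℝ := Real.sqrt (∑ i, (u i) ^ 2)

/-- ℓ1 norm. -/
def l1 {p : ℕ} (u : Vec p) : ℝ := ∑ i, |u i|

/-- Euclidean inner product. -/
def dotp {p : ℕ} (u v : Vec p) : ℝ := ∑ i, u i * v i

/-- θ_s(u,v) = (‖u‖₂ + s^{-1/2}‖u‖₁)(‖v‖₂ + s^{-1/2}‖v‖₁). -/
def theta {p : ℕ} (s : ℝ) (u v : Vec p) : ℝ :=
  (l2 u + (Real.sqrt s)⁻¹ * l1 u) * (l2 v + (Real.sqrt s)⁻¹ * l1 v)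

/-- Frobenius (Hilbert–Schmidt) inner product. -/
def frob {p : ℕ} (A B : Mat p) : ℝ := ∑ i, ∑ j, A i j * B i j

/-- Frobenius norm. -/
def frobNorm {p : ℕ} (A : Mat p) : ℝ := Real.sqrt (frob A A)

/-- The mixed atomic norm ‖B‖_{Γ_s}. -/
def mixedNorm {p : ℕ} (s : ℝ) (B : Mat p) : ℝ :=
  sInf { t | ∃ (K : ℕ) (u v : Fin K → Vec p),
    B = ∑ k, Matrix.vecMulVec (u k) (v k) ∧ t = ∑ k, theta s (u k) (v k) }

/-- Dual norm of the mixed atomic norm. -/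
def dualMixedNorm {p : ℕ} (s : ℝ) (Z : Mat p) : ℝ :=
  sSup { t | ∃ B : Mat p, mixedNorm s B ≤ 1 ∧ t = frob Z B }

/-- A vector is `s`-sparse if it has at most `s` nonzero entries. -/
def IsSparse {p : ℕ} (s : ℕ) (u : Vec p) : Prop := {i | u i ≠ 0}.ncard ≤ s

/-- Nuclear norm of a real matrix: the sum of its singular values. -/
def nuclearNorm {p : ℕ} (A : Mat p) : ℝ :=
  ∑ i, Real.sqrt ((Matrix.isHermitian_conjTranspose_mul_self A).eigenvalues i)

/-- Operator (spectral) norm of a real matrix. -/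
def opNorm {p : ℕ} (A : Mat p) : ℝ :=
  sSup { t | ∃ u v : Vec p, l2 u ≤ 1 ∧ l2 v ≤ 1 ∧ t = dotp (A.mulVec u) v }

/-- `X` has sub-Gaussian (ψ₂) norm at most `K`: `E exp(X²/K²) ≤ 2`. -/
def HasSubgaussianNorm {Ω : Type*} [MeasurableSpace Ω] (μ : Measure Ω) (X : Ω → ℝ) (K : ℝ) :
    Prop := ∫ ω, Real.exp ((X ω) ^ 2 / K ^ 2) ∂μ ≤ 2

/-- `W` is a subgradient of the mixed atomic norm `‖·‖_{Γ_s}` at `B`. -/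
def InSubdiff {p : ℕ} (s : ℝ) (W B : Mat p) : Prop :=
  ∀ C : Mat p, mixedNorm s B + frob W (C - B) ≤ mixedNorm s C

/-! Each `u` splits into `s`-sparse pieces `w₁, w₂, …` by peeling off its `s` largest entries in
modulus, again and again. The first piece has `‖w₁‖₂ ≤ ‖u‖₂`; every entry of `w_{k+1}` is at most
the average modulus `‖w_k‖₁ / s` of the entries of `w_k`, so `‖w_{k+1}‖₂ ≤ s^{-1/2} ‖w_k‖₁`, and
altogether `∑ ‖w_k‖₂ ≤ ‖u‖₂ + s^{-1/2} ‖u‖₁`. Splitting both factors of an atom `u ⊗ v` this way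
bounds `⟨Z, u ⊗ v⟩` by `θ_s(u, v)` times the sparse supremum `M`, hence `⟨Z, A⟩ ≤ ‖A‖_{Γ_s} M`. -/

lemma dotp_eq_dotProduct {p : ℕ} (u v : Vec p) : dotp u v = u ⬝ᵥ v := rfl

lemma l2_nonneg {p : ℕ} (u : Vec p) : 0 ≤ l2 u := Real.sqrt_nonneg _

lemma l1_nonneg {p : ℕ} (u : Vec p) : 0 ≤ l1 u := sum_nonneg fun i _ => abs_nonneg (u i)

lemma abs_le_l2 {p : ℕ} (u : Vec p) (i : Fin p) : |u i| ≤ l2 u := by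
  rw [← Real.sqrt_sq_eq_abs]
  exact Real.sqrt_le_sqrt
    (single_le_sum (f := fun j => u j ^ 2) (fun j _ => sq_nonneg (u j)) (mem_univ i))

lemma eq_zero_of_l2_eq_zero {p : ℕ} {u : Vec p} (h : l2 u = 0) : u = 0 :=
  funext fun i => abs_nonpos_iff.mp (h ▸ abs_le_l2 u i)

lemma l2_le_l2_of_abs_le {p : ℕ} {u v : Vec p} (h : ∀ i, |u i| ≤ |v i|) : l2 u ≤ l2 v :=
  Real.sqrt_le_sqrt (sum_le_sum fun i _ => sq_le_sq.mpr (h i))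

lemma l2_smul {p : ℕ} (c : ℝ) (u : Vec p) : l2 (c • u) = |c| * l2 u := by
  simp only [l2, Pi.smul_apply, smul_eq_mul, mul_pow, ← mul_sum]
  rw [Real.sqrt_mul (sq_nonneg c), Real.sqrt_sq_eq_abs]

lemma l2_inv_smul_self_le_one {p : ℕ} (u : Vec p) : l2 ((l2 u)⁻¹ • u) ≤ 1 := by
  rw [l2_smul, abs_inv, abs_of_nonneg (l2_nonneg u)]
  exact inv_mul_le_one

lemma l2_smul_inv_smul_self {p : ℕ} (u : Vec p) : l2 u • (l2 u)⁻¹ • u = u := by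
  rcases eq_or_ne (l2 u) 0 with h | h
  · simp [eq_zero_of_l2_eq_zero h]
  · exact smul_inv_smul₀ h u

lemma l2_le_sqrt_card_mul {p : ℕ} {u : Vec p} (T : Finset (Fin p)) (hT : ∀ i ∉ T, u i = 0)
    {c : ℝ} (hc : 0 ≤ c) (hu : ∀ i, |u i| ≤ c) : l2 u ≤ √(#T : ℝ) * c := by
  have hsum : ∑ i, u i ^ 2 ≤ #T * c ^ 2 :=
    calc ∑ i, u i ^ 2 = ∑ i ∈ T, u i ^ 2 :=
          (sum_subset (subset_univ T) fun i _ hi => by simp [hT i hi]).symm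
      _ ≤ ∑ _i ∈ T, c ^ 2 := sum_le_sum fun i _ => sq_le_sq.mpr ((hu i).trans (le_abs_self c))
      _ = #T * c ^ 2 := by rw [sum_const, nsmul_eq_mul]
  calc l2 u ≤ √(#T * c ^ 2) := Real.sqrt_le_sqrt hsum
    _ = √(#T : ℝ) * c := by rw [Real.sqrt_mul (Nat.cast_nonneg _), Real.sqrt_sq hc]

lemma isSparse_zero {p s : ℕ} : IsSparse s (0 : Vec p) := by
  simp [IsSparse]

lemma isSparse_of_eq_zero_of_notMem {p s : ℕ} {u : Vec p} (T : Finset (Fin p))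
    (hT : ∀ i ∉ T, u i = 0) (hTs : #T ≤ s) : IsSparse s u :=
  calc {i | u i ≠ 0}.ncard ≤ (T : Set (Fin p)).ncard :=
        Set.ncard_le_ncard (fun i hi => by_contra fun h => hi (hT i h)) T.finite_toSet
    _ ≤ s := (Set.ncard_coe_finset T).trans_le hTs

lemma IsSparse.smul {p s : ℕ} {u : Vec p} (hu : IsSparse s u) (c : ℝ) : IsSparse s (c • u) :=
  (Set.ncard_le_ncard (Function.support_const_smul_subset c u) (Set.toFinite _)).trans hu

lemma exists_subset_card_eq_forall_le {ι α : Type*} [DecidableEq ι] [LinearOrder α]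
    (f : ι → α) (S : Finset ι) {k : ℕ} (hk : k ≤ #S) :
    ∃ T ⊆ S, #T = k ∧ ∀ i ∈ T, ∀ j ∈ S \ T, f j ≤ f i := by
  induction k with
  | zero => exact ⟨∅, empty_subset S, card_empty, by simp⟩
  | succ k ih =>
    obtain ⟨T, hTS, hTk, hT⟩ := ih (by omega)
    have hne : (S \ T).Nonempty := by
      rw [← card_pos, card_sdiff_of_subset hTS]
      omega
    obtain ⟨m, hm, hmax⟩ := exists_max_image (S \ T) f hne
    obtain ⟨hmS, hmT⟩ := mem_sdiff.mp hm
    refine ⟨insert m T, insert_subset hmS hTS, by rw [card_insert_of_notMem hmT, hTk], ?_⟩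
    intro i hi j hj
    have hjST : j ∈ S \ T := by
      simp only [mem_sdiff, mem_insert, not_or] at hj ⊢
      exact ⟨hj.1, hj.2.2⟩
    rcases mem_insert.mp hi with rfl | hiT
    · exact hmax j hjST
    · exact hT i hiT j hjST

def HasSparseDecomposition {p : ℕ} (s : ℕ) (B : ℝ) (u : Vec p) : Prop :=
  ∃ (K : ℕ) (w : Fin K → Vec p), u = ∑ k, w k ∧ (∀ k, IsSparse s (w k)) ∧ ∑ k, l2 (w k) ≤ B

namespace HasSparseDecomposition

variable {p s : ℕ} {B : ℝ} {u : Vec p}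

lemma of_isSparse (hu : IsSparse s u) (hB : l2 u ≤ B) : HasSparseDecomposition s B u :=
  ⟨1, fun _ => u, by simp, fun _ => hu, by simpa using hB⟩

lemma sparse_add {a : Vec p} (ha : IsSparse s a) (hu : HasSparseDecomposition s B u) :
    HasSparseDecomposition s (l2 a + B) (a + u) := by
  obtain ⟨K, w, rfl, hw, hB⟩ := hu
  refine ⟨K + 1, Fin.cons a w, by rw [Fin.sum_cons], fun k => Fin.cases ha hw k, ?_⟩
  rw [Fin.sum_univ_succ]
  simp only [Fin.cons_zero, Fin.cons_succ]
  gcongr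

lemma mono (hu : HasSparseDecomposition s B u) {B' : ℝ} (hB : B ≤ B') :
    HasSparseDecomposition s B' u :=
  let ⟨K, w, hw, hsp, hle⟩ := hu
  ⟨K, w, hw, hsp, hle.trans hB⟩

end HasSparseDecomposition

-- The `min` lets one induction serve both the first block, bounded by `‖u‖₂`, and the later ones,
-- bounded through the entrywise bound `c` inherited from the previous block.
lemma hasSparseDecomposition_of_abs_le {p s : ℕ} (hs : 0 < s) (S : Finset (Fin p)) {u : Vec p}
    (hS : ∀ i ∉ S, u i = 0) {c : ℝ} (hc : 0 ≤ c) (hu : ∀ i, |u i| ≤ c) :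
    HasSparseDecomposition s (min (l2 u) (√(s : ℝ) * c) + (√(s : ℝ))⁻¹ * l1 u) u := by
  induction S using Finset.strongInduction generalizing u c with
  | H S ih =>
  by_cases hSs : #S ≤ s
  · have hl1 : 0 ≤ (√(s : ℝ))⁻¹ * l1 u := mul_nonneg (by positivity) (l1_nonneg u)
    have hu2 : l2 u ≤ √(s : ℝ) * c := (l2_le_sqrt_card_mul S hS hc hu).trans (by gcongr)
    refine .of_isSparse (isSparse_of_eq_zero_of_notMem S hS hSs) ?_
    linarith [le_min le_rfl hu2]
  obtain ⟨T, hTS, hTs, hTtop⟩ :=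
    exists_subset_card_eq_forall_le (fun i => |u i|) S (not_le.mp hSs).le
  set a := (T : Set (Fin p)).indicator u
  set b := (T : Set (Fin p))ᶜ.indicator u
  have hab : a + b = u := Set.indicator_self_add_compl _ _
  have haT : ∀ i ∉ T, a i = 0 := fun i hi => Set.indicator_of_notMem hi u
  have habs_a : ∀ i, |a i| ≤ |u i| := fun i => by
    by_cases hi : i ∈ T <;> simp [a, hi]
  have hl1 : l1 u = l1 a + l1 b := by
    simp only [l1, ← sum_add_distrib]
    refine sum_congr rfl fun i _ => ?_
    by_cases hi : i ∈ T <;> simp [a, b, hi]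
  have hbST : ∀ j ∉ S \ T, b j = 0 := fun j hj => by
    by_cases hjT : j ∈ T
    · simp [b, hjT]
    · simp [b, hjT, hS j (by simpa [hjT] using hj)]
  have hb : ∀ j, |b j| ≤ l1 a / s := fun j => by
    by_cases hj : j ∈ S \ T
    · have hjT := (mem_sdiff.mp hj).2
      rw [le_div_iff₀ (by exact_mod_cast hs)]
      calc |b j| * s = ∑ _i ∈ T, |u j| := by simp [b, hjT, hTs, mul_comm]
        _ ≤ ∑ i ∈ T, |a i| := sum_le_sum fun i hi => by simpa [a, hi] using hTtop i hi j hj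
        _ ≤ l1 a := sum_le_sum_of_subset_of_nonneg (subset_univ T) fun i _ _ => abs_nonneg (a i)
    · rw [hbST j hj, abs_zero]
      exact div_nonneg (l1_nonneg a) (Nat.cast_nonneg s)
  have hSTS : S \ T ⊂ S := sdiff_ssubset hTS (card_pos.mp (hTs ▸ hs))
  have hdec_b := ih (S \ T) hSTS hbST (div_nonneg (l1_nonneg a) (Nat.cast_nonneg s)) hb
  have ha2 : l2 a ≤ min (l2 u) (√(s : ℝ) * c) :=
    le_min (l2_le_l2_of_abs_le habs_a)
      (hTs ▸ l2_le_sqrt_card_mul T haT hc fun i => (habs_a i).trans (hu i))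
  have hsqrt : √(s : ℝ) * (l1 a / s) = (√(s : ℝ))⁻¹ * l1 a := by
    have : (0 : ℝ) < √(s : ℝ) := Real.sqrt_pos.mpr (by exact_mod_cast hs)
    field_simp
    rw [Real.sq_sqrt (Nat.cast_nonneg s), mul_comm]
  have hbound : l2 a + (min (l2 b) (√(s : ℝ) * (l1 a / s)) + (√(s : ℝ))⁻¹ * l1 b) ≤
      min (l2 u) (√(s : ℝ) * c) + (√(s : ℝ))⁻¹ * l1 u := by
    rw [hl1, mul_add]
    linarith [min_le_right (l2 b) (√(s : ℝ) * (l1 a / s))]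
  have hdec := (hdec_b.sparse_add (isSparse_of_eq_zero_of_notMem T haT hTs.le)).mono hbound
  rwa [hab] at hdec

lemma exists_sparse_decomposition {p s : ℕ} (hs : 0 < s) (u : Vec p) :
    HasSparseDecomposition s (l2 u + (√(s : ℝ))⁻¹ * l1 u) u :=
  (hasSparseDecomposition_of_abs_le hs univ (fun i hi => absurd (mem_univ i) hi) (l2_nonneg u)
    (abs_le_l2 u)).mono (by gcongr; exact min_le_left _ _)

lemma frob_sum {p K : ℕ} (Z : Mat p) (B : Fin K → Mat p) :
    frob Z (∑ k, B k) = ∑ k, frob Z (B k) := by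
  simp only [frob, Matrix.sum_apply, Finset.mul_sum]
  exact (sum_congr rfl fun i _ => sum_comm).trans sum_comm

lemma frob_vecMulVec {p : ℕ} (Z : Mat p) (u v : Vec p) :
    frob Z (Matrix.vecMulVec u v) = dotp (Z.mulVec v) u := by
  simp only [frob, dotp, Matrix.vecMulVec_apply, Matrix.mulVec, dotProduct, sum_mul]
  exact sum_congr rfl fun i _ => sum_congr rfl fun j _ => by ring

lemma eq_sum_vecMulVec_single {p : ℕ} (A : Mat p) :
    A = ∑ i, Matrix.vecMulVec (Pi.single i 1) (A i) := by
  ext j k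
  simp [Matrix.sum_apply, Matrix.vecMulVec_apply, Pi.single_apply]

lemma dotp_mulVec_le_sum_abs {p : ℕ} (Z : Mat p) {u v : Vec p} (hu : l2 u ≤ 1) (hv : l2 v ≤ 1) :
    dotp (Z.mulVec u) v ≤ ∑ i, ∑ j, |Z i j| := by
  calc dotp (Z.mulVec u) v = ∑ i, ∑ j, Z i j * u j * v i := by
        simp only [dotp, Matrix.mulVec, dotProduct, sum_mul]
    _ ≤ ∑ i, ∑ j, |Z i j| := by
        gcongr with i _ j _
        calc Z i j * u j * v i ≤ |Z i j| * |u j| * |v i| := by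
              rw [← abs_mul, ← abs_mul]
              exact le_abs_self _
          _ ≤ |Z i j| * 1 * 1 := by
              gcongr
              exacts [(abs_le_l2 u j).trans hu, (abs_le_l2 v i).trans hv]
          _ = |Z i j| := by ring

def BoundsSparseUnitPairs {p : ℕ} (s : ℕ) (Z : Mat p) (M : ℝ) : Prop :=
  ∀ u v : Vec p, l2 u ≤ 1 → l2 v ≤ 1 → IsSparse s u → IsSparse s v → dotp (Z.mulVec u) v ≤ M

section BoundsSparseUnitPairs

variable {p s : ℕ} {Z : Mat p} {M : ℝ}

lemma BoundsSparseUnitPairs.dotp_mulVec_le (h : BoundsSparseUnitPairs s Z M) {u v : Vec p}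
    (hu : IsSparse s u) (hv : IsSparse s v) : dotp (Z.mulVec u) v ≤ l2 u * l2 v * M := by
  have hM := h _ _ (l2_inv_smul_self_le_one u) (l2_inv_smul_self_le_one v) (hu.smul _) (hv.smul _)
  calc dotp (Z.mulVec u) v = l2 u * l2 v * dotp (Z.mulVec ((l2 u)⁻¹ • u)) ((l2 v)⁻¹ • v) := by
        conv_lhs => rw [← l2_smul_inv_smul_self u, ← l2_smul_inv_smul_self v]
        simp only [dotp_eq_dotProduct, Matrix.mulVec_smul, smul_dotProduct, dotProduct_smul,
          smul_eq_mul]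
        ring
    _ ≤ l2 u * l2 v * M := by
        gcongr
        exact mul_nonneg (l2_nonneg u) (l2_nonneg v)

lemma BoundsSparseUnitPairs.frob_vecMulVec_le (h : BoundsSparseUnitPairs s Z M) (hs : 0 < s)
    (hM : 0 ≤ M) (u v : Vec p) : frob Z (Matrix.vecMulVec u v) ≤ theta s u v * M := by
  obtain ⟨K, w, rfl, hw, hwB⟩ := exists_sparse_decomposition hs u
  obtain ⟨L, x, rfl, hx, hxB⟩ := exists_sparse_decomposition hs v
  calc frob Z (Matrix.vecMulVec (∑ k, w k) (∑ l, x l))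
        = ∑ k, ∑ l, dotp (Z.mulVec (x l)) (w k) := by
        simp only [frob_vecMulVec, dotp_eq_dotProduct, Matrix.mulVec_sum, sum_dotProduct,
          dotProduct_sum]
    _ ≤ ∑ k, ∑ l, l2 (x l) * l2 (w k) * M := by
        gcongr with k _ l _
        exact h.dotp_mulVec_le (hx l) (hw k)
    _ = (∑ k, l2 (w k)) * (∑ l, l2 (x l)) * M := by
        rw [Finset.sum_mul_sum, Finset.sum_mul]
        refine sum_congr rfl fun k _ => ?_
        rw [Finset.sum_mul]
        exact sum_congr rfl fun l _ => by ring
    _ ≤ theta s (∑ k, w k) (∑ l, x l) * M :=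
        mul_le_mul_of_nonneg_right (mul_le_mul hwB hxB (sum_nonneg fun l _ => l2_nonneg (x l))
          ((sum_nonneg fun k _ => l2_nonneg (w k)).trans hwB)) hM

lemma BoundsSparseUnitPairs.frob_le_mixedNorm_mul (h : BoundsSparseUnitPairs s Z M) (hs : 0 < s)
    (hM : 0 ≤ M) (A : Mat p) : frob Z A ≤ mixedNorm s A * M := by
  rw [mixedNorm, mul_comm, ← smul_eq_mul, ← Real.sInf_smul_of_nonneg hM]
  refine le_csInf (Set.Nonempty.smul_set ⟨_, p, _, _, eq_sum_vecMulVec_single A, rfl⟩) ?_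
  rintro _ ⟨_, ⟨K, u, v, rfl, rfl⟩, rfl⟩
  simp only [frob_sum, smul_eq_mul, Finset.mul_sum]
  exact sum_le_sum fun k _ => (h.frob_vecMulVec_le hs hM (u k) (v k)).trans_eq (mul_comm _ _)

end BoundsSparseUnitPairs

/-- Lemma A.1, consequence. The sup of `⟨Z,A⟩` over the mixed-atomic-norm ball is
at most the sup of `⟨Zu,v⟩` over s-sparse pairs of vectors in the Euclidean unit ball. -/
theorem sup_mixed_ball_le_sup_sparse {p s : ℕ} (hs : 0 < s) (Z : Mat p) :
    sSup {t | ∃ A : Mat p, mixedNorm (s : ℝ) A ≤ 1 ∧ t = frob Z A} ≤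
    sSup {t | ∃ u v : Vec p, l2 u ≤ 1 ∧ l2 v ≤ 1 ∧ IsSparse s u ∧ IsSparse s v ∧
      t = dotp (Z.mulVec u) v} := by
  set S : Set ℝ := {t | ∃ u v : Vec p, l2 u ≤ 1 ∧ l2 v ≤ 1 ∧ IsSparse s u ∧ IsSparse s v ∧
      t = dotp (Z.mulVec u) v}
  have hbdd : BddAbove S := by
    refine ⟨∑ i, ∑ j, |Z i j|, ?_⟩
    rintro _ ⟨u, v, hu, hv, -, -, rfl⟩
    exact dotp_mulVec_le_sum_abs Z hu hv
  set M := sSup S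
  have hZM : BoundsSparseUnitPairs s Z M := fun u v hu hv hsu hsv =>
    le_csSup hbdd ⟨u, v, hu, hv, hsu, hsv, rfl⟩
  have hM : 0 ≤ M := by
    simpa [dotp] using hZM 0 0 (by simp [l2]) (by simp [l2]) isSparse_zero isSparse_zero
  refine Real.sSup_le ?_ hM
  rintro _ ⟨A, hA, rfl⟩
  calc frob Z A ≤ mixedNorm s A * M := hZM.frob_le_mixedNorm_mul hs hM A
    _ ≤ M := mul_le_of_le_one_left hM hA
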